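/- For every k ≥ 3: the set A_{<k} is the disjoint union of A_{<k-1} and the translate t_{k-1} + A_{<k-1}; consequently, in A[w], e_k(w) = e_{k-1}(w)·e_{k-1}(w + t_{k-1}) = e_{k-1}(w)² + D_{k-1}·e_{k-1}(w). -/
import Mathlib


noncomputable section

open Polynomial
open scoped Classical

/-- The defining polynomial `Y² + Y + (X³ + X + 1)` over `𝔽₂[X]`,
viewed as a polynomial in `Y` with coefficients in `𝔽₂[X]`. -/
def curveEq : Polynomial (Polynomial (ZMod 2)) :=
  X ^ 2 + X + C (X ^ 3 + X + 1)

/-- The ring `A = 𝔽₂[X,Y]/(Y² + Y + X³ + X + 1)`. -/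
abbrev A : Type := AdjoinRoot curveEq

/-- The image `x` of `X` in `A`. -/
def aX : A := AdjoinRoot.of curveEq (X : Polynomial (ZMod 2))

/-- The image `y` of `Y` in `A`. -/
def aY : A := AdjoinRoot.root curveEq

/-- The bracket `[j]_x = x^{2^j} + x ∈ A`. -/
def brX (j : ℕ) : A := aX ^ 2 ^ j + aX

/-- The monomials `xⁱyʲ` with `j ∈ {0,1}` and `2i + 3j < k`. -/
def monoSet (k : ℕ) : Finset A :=
  ((Finset.range k ×ˢ Finset.range 2).filter fun p => 2 * p.1 + 3 * p.2 < k).image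
    fun p => aX ^ p.1 * aY ^ p.2

/-- `A_{<k}` : the `𝔽₂`-linear span of the monomials `xⁱyʲ` with `j ∈ {0,1}`
and `2i + 3j < k`, realized as the finite set of all subset sums. -/
def Alt (k : ℕ) : Finset A := (monoSet k).powerset.image fun s => s.sum id

/-- `t_k := x^{k/2}` if `k` is even, `t_k := y·x^{(k-3)/2}` if `k` is odd. -/
def tk (k : ℕ) : A := if Even k then aX ^ (k / 2) else aY * aX ^ ((k - 3) / 2)

/-- `e_k(w) := ∏_{a ∈ A_{<k}} (w + a) ∈ A[w]`. -/
def ePoly (k : ℕ) : Polynomial A := ∏ a ∈ Alt k, (X + C a)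

/-- `D_k := e_k(t_k)`, the product of all monic elements of `A` of degree `k`. -/
def Dk (k : ℕ) : A := (ePoly k).eval (tk k)

variable (K : Type) [Field K] [Algebra A K]

/-- The coefficients `a_j = 1/d_j` of the exponential function:
`a₀ = a₁ = 1` and `a_j = ([1]_x·a_{j-1}² + a_{j-2}⁴)/[j]_x` for `j ≥ 2`. -/
def aSeq : ℕ → K
  | 0 => 1
  | 1 => 1
  | (j + 2) =>
      (algebraMap A K (brX 1) * (aSeq (j + 1)) ^ 2 + (aSeq j) ^ 4) /
        algebraMap A K (brX (j + 2))

/-- The coefficients `b_j = 1/ℓ_j` of the logarithm function: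
`b₀ = b₁ = 1` and `b_j = ([1]_x^{2^{j-1}}·b_{j-1} + b_{j-2})/[j]_x` for `j ≥ 2`. -/
def bSeq : ℕ → K
  | 0 => 1
  | 1 => 1
  | (j + 2) =>
      (algebraMap A K (brX 1) ^ 2 ^ (j + 1) * bSeq (j + 1) + bSeq j) /
        algebraMap A K (brX (j + 2))

/-- `p_k(w) := Σ_{j=0}^{k} a_j·b_{k-j}^{2^j}·w^{2^j} ∈ K[w]`. -/
def pPoly (k : ℕ) : Polynomial K :=
  ∑ j ∈ Finset.range (k + 1), C (aSeq K j * (bSeq K (k - j)) ^ 2 ^ j) * X ^ 2 ^ j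

/-- `S_{n,r}(x₁,…,x_n) := Σ_{n ≥ i₁ > i₂ > … > i_r ≥ 1} ∏_{j=1}^{r}
x_{i_j}^{2^{n-j+1-i_j}}`, with `S_{n,0} = 1` and `S_{n,r} = 0` for `r > n`. -/
def Ssum (R : Type*) [CommRing R] (n r : ℕ) (x : ℕ → R) : R :=
  ∑ f ∈ Finset.univ.filter
      (fun f : Fin r → Fin (n + 1) => StrictAnti f ∧ ∀ j, 1 ≤ (f j : ℕ)),
    ∏ j : Fin r, x (f j) ^ 2 ^ (n - (j : ℕ) - (f j : ℕ))

-- ================= auxiliary development =================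

lemma degree_curveEq : curveEq.degree = 2 := by
  have h : curveEq = X ^ 2 + ((X : Polynomial (Polynomial (ZMod 2))) + C (X ^ 3 + X + 1)) := by
    rw [curveEq]; ring
  rw [h, degree_add_eq_left_of_degree_lt, degree_X_pow]
  · norm_num
  · rw [degree_X_pow, degree_X_add_C]
    exact_mod_cast one_lt_two

lemma repr_eq_zero {p q : Polynomial (ZMod 2)}
    (h : AdjoinRoot.of curveEq p + AdjoinRoot.of curveEq q * AdjoinRoot.root curveEq = 0) :
    p = 0 ∧ q = 0 := by
  have h1 : AdjoinRoot.mk curveEq (C p + C q * X) = 0 := by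
    simpa [map_add, map_mul, AdjoinRoot.mk_C, AdjoinRoot.mk_X] using h
  have hdvd : curveEq ∣ C p + C q * X := (AdjoinRoot.mk_eq_zero).1 h1
  have hz : C p + C q * X = 0 := by
    by_contra hne
    have hd := Polynomial.degree_le_of_dvd hdvd hne
    rw [degree_curveEq] at hd
    have hle : (C p + C q * X).degree ≤ 1 := by
      rw [add_comm]; exact Polynomial.degree_linear_le
    have : (2 : WithBot ℕ) ≤ 1 := le_trans hd hle
    exact absurd this (by decide)
  constructor
  · have := congrArg (fun r => Polynomial.coeff r 0) hz
    simpa using this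
  · have := congrArg (fun r => Polynomial.coeff r 1) hz
    simpa using this

lemma one_ne_zero_A : (1 : A) ≠ 0 := by
  intro h
  have : AdjoinRoot.of curveEq 1 + AdjoinRoot.of curveEq 0 * AdjoinRoot.root curveEq = 0 := by
    simp [h]
  exact one_ne_zero (repr_eq_zero this).1

instance : Nontrivial A := nontrivial_of_ne 1 0 one_ne_zero_A

lemma two_eq_zero_A : (2 : A) = 0 := by
  have h : ((2 : ℕ) : Polynomial (Polynomial (ZMod 2))) = 0 :=
    CharP.cast_eq_zero (Polynomial (Polynomial (ZMod 2))) 2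
  calc (2 : A) = ((2 : ℕ) : A) := by norm_cast
    _ = AdjoinRoot.mk curveEq ((2 : ℕ) : Polynomial (Polynomial (ZMod 2))) :=
        (map_natCast (AdjoinRoot.mk curveEq) 2).symm
    _ = 0 := by rw [h, map_zero]

lemma add_self_A (a : A) : a + a = 0 := by
  rw [← two_mul, two_eq_zero_A, zero_mul]

lemma two_eq_zero_PA : (2 : Polynomial A) = 0 := by
  rw [← map_ofNat (C : A →+* Polynomial A) 2, two_eq_zero_A, map_zero]

lemma sq_add_PA (p q : Polynomial A) : (p + q) ^ 2 = p ^ 2 + q ^ 2 := by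
  have : (p + q) ^ 2 = p ^ 2 + 2 * p * q + q ^ 2 := by ring
  rw [this, two_eq_zero_PA]; ring

-- index sets
def idxS (k : ℕ) : Finset (ℕ × ℕ) :=
  (Finset.range k ×ˢ Finset.range 2).filter fun p => 2 * p.1 + 3 * p.2 < k

def mval (p : ℕ × ℕ) : A := aX ^ p.1 * aY ^ p.2

lemma mem_idxS {k : ℕ} {p : ℕ × ℕ} : p ∈ idxS k ↔ p.2 < 2 ∧ 2 * p.1 + 3 * p.2 < k := by
  simp only [idxS, Finset.mem_filter, Finset.mem_product, Finset.mem_range]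
  omega

lemma sum_X_pow_eq_zero {T : Finset (ℕ × ℕ)}
    (hinj : ∀ p ∈ T, ∀ q ∈ T, p.1 = q.1 → p = q)
    (h : (∑ p ∈ T, (X : Polynomial (ZMod 2)) ^ p.1) = 0) : T = ∅ := by
  by_contra hne
  obtain ⟨p, hp⟩ := Finset.nonempty_iff_ne_empty.2 hne
  have hc := congrArg (fun f => Polynomial.coeff f p.1) h
  simp only [finset_sum_coeff, coeff_X_pow, coeff_zero] at hc
  rw [Finset.sum_eq_single p] at hc
  · simp at hc
  · intro q hq hqp
    have hne' : p.1 ≠ q.1 := fun e => hqp (hinj q hq p hp e.symm)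
    simp [hne']
  · intro h'; exact absurd hp h'

lemma sum_mval_eq_zero {S : Finset (ℕ × ℕ)} (hS : ∀ p ∈ S, p.2 < 2)
    (h : S.sum mval = 0) : S = ∅ := by
  classical
  set S0 := S.filter (fun p => p.2 = 0) with hS0
  set S1 := S.filter (fun p => p.2 = 1) with hS1
  have hsplit : S = S0 ∪ S1 := by
    ext p
    simp only [hS0, hS1, Finset.mem_union, Finset.mem_filter]
    constructor
    · intro hp
      have h2 := hS p hp
      have : p.2 = 0 ∨ p.2 = 1 := by omega
      rcases this with h0 | h1
      · exact Or.inl ⟨hp, h0⟩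
      · exact Or.inr ⟨hp, h1⟩
    · rintro (⟨hp, _⟩ | ⟨hp, _⟩) <;> exact hp
  have hdisj : Disjoint S0 S1 := by
    rw [Finset.disjoint_left]
    intro p hp0 hp1
    simp only [hS0, Finset.mem_filter] at hp0
    simp only [hS1, Finset.mem_filter] at hp1
    omega
  have hsum0 : S0.sum mval = AdjoinRoot.of curveEq (∑ p ∈ S0, X ^ p.1) := by
    rw [map_sum]
    apply Finset.sum_congr rfl
    intro p hp
    simp only [hS0, Finset.mem_filter] at hp
    rw [mval, hp.2, pow_zero, mul_one, map_pow]
    rfl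
  have hsum1 : S1.sum mval
      = AdjoinRoot.of curveEq (∑ p ∈ S1, X ^ p.1) * AdjoinRoot.root curveEq := by
    rw [map_sum, Finset.sum_mul]
    apply Finset.sum_congr rfl
    intro p hp
    simp only [hS1, Finset.mem_filter] at hp
    rw [mval, hp.2, pow_one, map_pow]
    rfl
  have h0 : AdjoinRoot.of curveEq (∑ p ∈ S0, X ^ p.1)
      + AdjoinRoot.of curveEq (∑ p ∈ S1, X ^ p.1) * AdjoinRoot.root curveEq = 0 := by
    rw [← hsum0, ← hsum1, ← Finset.sum_union hdisj, ← hsplit, h]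
  obtain ⟨hP, hQ⟩ := repr_eq_zero h0
  have hS0e : S0 = ∅ := by
    apply sum_X_pow_eq_zero _ hP
    intro p hp q hq he
    simp only [hS0, Finset.mem_filter] at hp hq
    exact Prod.ext he (hp.2.trans hq.2.symm)
  have hS1e : S1 = ∅ := by
    apply sum_X_pow_eq_zero _ hQ
    intro p hp q hq he
    simp only [hS1, Finset.mem_filter] at hp hq
    exact Prod.ext he (hp.2.trans hq.2.symm)
  rw [hsplit, hS0e, hS1e, Finset.union_empty]

lemma sum_mval_inj {S T : Finset (ℕ × ℕ)} (hS : ∀ p ∈ S, p.2 < 2) (hT : ∀ p ∈ T, p.2 < 2)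
    (h : S.sum mval = T.sum mval) : S = T := by
  have hd : Disjoint (S \ T) (T \ S) := disjoint_sdiff_sdiff
  have h1 : (S \ T).sum mval + (S ∩ T).sum mval = S.sum mval := by
    rw [← Finset.sum_union (Finset.disjoint_sdiff_inter S T), Finset.sdiff_union_inter]
  have h2 : (T \ S).sum mval + (T ∩ S).sum mval = T.sum mval := by
    rw [← Finset.sum_union (Finset.disjoint_sdiff_inter T S), Finset.sdiff_union_inter]
  have h3 : (S \ T).sum mval = (T \ S).sum mval := by
    rw [Finset.inter_comm] at h1
    have := h1.trans (h.trans h2.symm)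
    exact add_right_cancel this
  have h4 : ((S \ T) ∪ (T \ S)).sum mval = 0 := by
    rw [Finset.sum_union hd, h3, add_self_A]
  have h5 : (S \ T) ∪ (T \ S) = ∅ := by
    apply sum_mval_eq_zero _ h4
    intro p hp
    rcases Finset.mem_union.1 hp with hp' | hp'
    · exact hS p (Finset.mem_sdiff.1 hp').1
    · exact hT p (Finset.mem_sdiff.1 hp').1
  obtain ⟨e1, e2⟩ := Finset.union_eq_empty.1 h5
  have hsub1 : S ⊆ T := by
    intro p hp
    by_contra hnp
    exact absurd (Finset.mem_sdiff.2 ⟨hp, hnp⟩) (by rw [e1]; exact Finset.notMem_empty p)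
  have hsub2 : T ⊆ S := by
    intro p hp
    by_contra hnp
    exact absurd (Finset.mem_sdiff.2 ⟨hp, hnp⟩) (by rw [e2]; exact Finset.notMem_empty p)
  exact Finset.Subset.antisymm hsub1 hsub2

lemma monoSet_eq (k : ℕ) : monoSet k = (idxS k).image mval := rfl

lemma mval_inj {p q : ℕ × ℕ} (hp : p.2 < 2) (hq : q.2 < 2) (h : mval p = mval q) : p = q := by
  have := sum_mval_inj (S := {p}) (T := {q})
    (by simpa using hp) (by simpa using hq) (by simpa using h)
  simpa using this

lemma Alt_eq (k : ℕ) : Alt k = (idxS k).powerset.image (fun s => s.sum mval) := by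
  ext a
  simp only [Alt, monoSet_eq, Finset.mem_image, Finset.mem_powerset]
  constructor
  · rintro ⟨s, hs, rfl⟩
    refine ⟨(idxS k).filter (fun p => mval p ∈ s), Finset.filter_subset _ _, ?_⟩
    have hinj : ∀ p ∈ (idxS k).filter (fun p => mval p ∈ s),
        ∀ q ∈ (idxS k).filter (fun p => mval p ∈ s), mval p = mval q → p = q := by
      intro p hp q hq he
      simp only [Finset.mem_filter] at hp hq
      exact mval_inj (mem_idxS.1 hp.1).1 (mem_idxS.1 hq.1).1 he
    have himg : ((idxS k).filter (fun p => mval p ∈ s)).image mval = s := by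
      ext b
      simp only [Finset.mem_image, Finset.mem_filter]
      constructor
      · rintro ⟨p, ⟨_, hmem⟩, rfl⟩; exact hmem
      · intro hb
        obtain ⟨p, hp, rfl⟩ := Finset.mem_image.1 (hs hb)
        exact ⟨p, ⟨hp, hb⟩, rfl⟩
    conv_rhs => rw [← himg]
    rw [Finset.sum_image hinj]
    simp only [id_eq]
  · rintro ⟨u, hu, rfl⟩
    refine ⟨u.image mval, Finset.image_subset_image hu, ?_⟩
    have hinj : ∀ p ∈ u, ∀ q ∈ u, mval p = mval q → p = q := by
      intro p hp q hq he
      exact mval_inj (mem_idxS.1 (hu hp)).1 (mem_idxS.1 (hu hq)).1 he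
    rw [Finset.sum_image hinj]
    simp only [id_eq]

def newp (m : ℕ) : ℕ × ℕ := if Even m then (m / 2, 0) else ((m - 3) / 2, 1)

lemma newp_snd_lt (m : ℕ) : (newp m).2 < 2 := by
  rw [newp]; split <;> norm_num

lemma newp_notMem (m : ℕ) : newp m ∉ idxS m := by
  rw [newp]
  split
  · next h =>
    rw [mem_idxS]
    have := Nat.even_iff.1 h
    simp only [not_and]
    intro _
    omega
  · next h =>
    rw [mem_idxS]
    have := Nat.odd_iff.1 (Nat.not_even_iff_odd.1 h)
    simp only [not_and]
    intro _
    omega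

lemma idxS_succ (m : ℕ) (hm : 2 ≤ m) : idxS (m + 1) = insert (newp m) (idxS m) := by
  ext ⟨i, j⟩
  rw [mem_idxS, Finset.mem_insert, mem_idxS, newp]
  rcases Nat.even_or_odd m with h | h
  · rw [if_pos h, Prod.mk.injEq]
    have := Nat.even_iff.1 h
    simp only []
    omega
  · rw [if_neg (Nat.not_even_iff_odd.2 h), Prod.mk.injEq]
    have := Nat.odd_iff.1 h
    simp only []
    omega

lemma mval_newp (m : ℕ) : mval (newp m) = tk m := by
  rcases Nat.even_or_odd m with h | h
  · rw [newp, if_pos h, tk, if_pos h, mval]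
    simp
  · rw [newp, if_neg (Nat.not_even_iff_odd.2 h), tk, if_neg (Nat.not_even_iff_odd.2 h), mval]
    simp [mul_comm]

lemma Alt_succ (m : ℕ) (hm : 2 ≤ m) :
    Alt (m + 1) = Alt m ∪ (Alt m).image (fun a => tk m + a) := by
  rw [Alt_eq, Alt_eq, idxS_succ m hm, Finset.powerset_insert, Finset.image_union,
    Finset.image_image, Finset.image_image]
  congr 1
  apply Finset.image_congr
  intro s hs
  simp only [Finset.mem_coe, Finset.mem_powerset] at hs
  have hnp : newp m ∉ s := fun hmem => newp_notMem m (hs hmem)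
  simp only [Function.comp_apply]
  rw [Finset.sum_insert hnp, mval_newp m]

lemma Alt_disj (m : ℕ) (hm : 2 ≤ m) :
    Disjoint (Alt m) ((Alt m).image (fun a => tk m + a)) := by
  rw [Finset.disjoint_left]
  intro z hz hz'
  rw [Alt_eq] at hz
  obtain ⟨u, hu, rfl⟩ := Finset.mem_image.1 hz
  rw [Finset.mem_image] at hz'
  obtain ⟨b, hb, hbz⟩ := hz'
  rw [Alt_eq] at hb
  obtain ⟨v, hv, rfl⟩ := Finset.mem_image.1 hb
  rw [Finset.mem_powerset] at hu hv
  have hnp : newp m ∉ v := fun hmem => newp_notMem m (hv hmem)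
  have heq : (insert (newp m) v).sum mval = u.sum mval := by
    rw [Finset.sum_insert hnp, mval_newp m]
    exact hbz
  have huv := sum_mval_inj ?_ ?_ heq
  · have : newp m ∈ u := huv ▸ Finset.mem_insert_self _ _
    exact newp_notMem m (mem_idxS.2 ⟨newp_snd_lt m, (mem_idxS.1 (hu this)).2⟩)
  · intro p hp
    rcases Finset.mem_insert.1 hp with rfl | hp'
    · exact newp_snd_lt m
    · exact (mem_idxS.1 (hv hp')).1
  · intro p hp
    exact (mem_idxS.1 (hu hp)).1

lemma ePoly_succ_mul (m : ℕ) (hm : 2 ≤ m) :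
    ePoly (m + 1) = ePoly m * (ePoly m).comp (X + C (tk m)) := by
  rw [ePoly, Alt_succ m hm, Finset.prod_union (Alt_disj m hm)]
  congr 1
  rw [Finset.prod_image, ePoly, Polynomial.prod_comp]
  · apply Finset.prod_congr rfl
    intro a _
    rw [add_comp, X_comp, C_comp, C_add]
    ring
  · intro a _ b _ h
    exact add_left_cancel h

lemma idxS_two : idxS 2 = {(0, 0)} := by decide

lemma Alt_two : Alt 2 = {0, 1} := by
  rw [Alt_eq, idxS_two]
  have hp : ({(0, 0)} : Finset (ℕ × ℕ)).powerset = {∅, {(0, 0)}} := rfl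
  rw [hp, Finset.image_insert, Finset.image_singleton]
  simp [mval]

lemma ePoly_two : ePoly 2 = X ^ 2 + X := by
  rw [ePoly, Alt_two, Finset.prod_insert (by simp), Finset.prod_singleton]
  rw [map_zero, map_one]
  ring

lemma ePoly_addComp : ∀ m : ℕ, 2 ≤ m → ∀ c : A,
    (ePoly m).comp (X + C c) = ePoly m + C ((ePoly m).eval c) := by
  intro m
  induction m with
  | zero => intro h; omega
  | succ n ih =>
    intro h c
    rcases Nat.lt_or_ge n 2 with hn | hn
    · have hn1 : n = 1 := by omega
      subst hn1
      rw [ePoly_two]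
      rw [add_comp, pow_comp, X_comp]
      rw [sq_add_PA]
      simp only [eval_add, eval_pow, eval_X, map_add]
      rw [← C_pow]
      ring
    · have hD : (ePoly n).comp (X + C (tk n)) = ePoly n + C (Dk n) := by
        rw [ih hn (tk n)]; rfl
      have hsq : ePoly (n + 1) = ePoly n ^ 2 + C (Dk n) * ePoly n := by
        rw [ePoly_succ_mul n hn, hD]; ring
      rw [hsq, add_comp, mul_comp, pow_comp, C_comp, ih hn c, sq_add_PA]
      simp only [eval_add, eval_mul, eval_pow, eval_C, map_add, map_mul, map_pow, C_pow]
      ring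

/-- For `k ≥ 3`: `A_{<k}` is the disjoint union of `A_{<k-1}` and the
translate `t_{k-1} + A_{<k-1}`; consequently, in `A[w]`,
`e_k(w) = e_{k-1}(w)·e_{k-1}(w + t_{k-1}) = e_{k-1}(w)² + D_{k-1}·e_{k-1}(w)`. -/
theorem stmt12 (k : ℕ) (hk : 3 ≤ k) :
    Disjoint (Alt (k - 1)) ((Alt (k - 1)).image (fun a => tk (k - 1) + a)) ∧
    Alt k = Alt (k - 1) ∪ (Alt (k - 1)).image (fun a => tk (k - 1) + a) ∧
    ePoly k = ePoly (k - 1) * (ePoly (k - 1)).comp (X + C (tk (k - 1))) ∧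
    ePoly k = (ePoly (k - 1)) ^ 2 + C (Dk (k - 1)) * ePoly (k - 1) := by
  obtain ⟨m, rfl⟩ : ∃ m, k = m + 1 := ⟨k - 1, by omega⟩
  have hm : 2 ≤ m := by omega
  simp only [Nat.add_sub_cancel]
  refine ⟨Alt_disj m hm, Alt_succ m hm, ePoly_succ_mul m hm, ?_⟩
  rw [ePoly_succ_mul m hm, ePoly_addComp m hm (tk m)]
  have : C ((ePoly m).eval (tk m)) = C (Dk m) := rfl
  rw [this]
  ring
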